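/- For every integer n ≥ 2, the number of matrices A = (a_{ij}) ∈ Δ_{n+2}^2 with a_{2,2} = 1 equals δ(n,2); explicitly, the map removing the first two rows and first two columns is a bijection from {A ∈ Δ_{n+2}^2 : a_{2,2} = 1} onto Δ_n^2. -/

import Mathlib

/-- The integer encoded (in binary, most significant digit first) by the `i`-th row
of the binary matrix `A`, i.e. `x_i = ∑_j a_{ij} 2^{m-j}` (1-indexed). -/
def rowVal {n m : ℕ} (A : Fin n → Fin m → Fin 2) (i : Fin n) : ℕ :=
  ∑ j : Fin m, (A i j : ℕ) * 2 ^ (m - 1 - (j : ℕ))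

/-- The integer encoded by the `j`-th column of `A`, i.e. `y_j = ∑_i a_{ij} 2^{n-i}`. -/
def colVal {n m : ℕ} (A : Fin n → Fin m → Fin 2) (j : Fin m) : ℕ :=
  ∑ i : Fin n, (A i j : ℕ) * 2 ^ (n - 1 - (i : ℕ))

/-- `A ∈ 𝔠_{n×m}`: rows and columns sorted in lexicographically nondecreasing order. -/
def memC {n m : ℕ} (A : Fin n → Fin m → Fin 2) : Prop :=
  Monotone (rowVal A) ∧ Monotone (colVal A)

/-- `A ∈ 𝔡_{n×m}`: rows and columns sorted in lexicographically nonincreasing order. -/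
def memD {n m : ℕ} (A : Fin n → Fin m → Fin 2) : Prop :=
  Antitone (rowVal A) ∧ Antitone (colVal A)

/-- `Λ_n^k`: n×n binary matrices with exactly `k` ones in each row and each column. -/
def lambdaSet (n k : ℕ) : Set (Fin n → Fin n → Fin 2) :=
  {A | (∀ i, ∑ j, (A i j : ℕ) = k) ∧ (∀ j, ∑ i, (A i j : ℕ) = k)}

/-- `Γ_n^k = 𝔠_{n×n} ∩ Λ_n^k`. -/
def GammaSet (n k : ℕ) : Set (Fin n → Fin n → Fin 2) :=
  {A | memC A} ∩ lambdaSet n k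

/-- `Δ_n^k = 𝔡_{n×n} ∩ Λ_n^k`. -/
def DeltaSet (n k : ℕ) : Set (Fin n → Fin n → Fin 2) :=
  {A | memD A} ∩ lambdaSet n k

/-- `γ(n,k) = |Γ_n^k|`. -/
noncomputable def gammaCard (n k : ℕ) : ℕ := (GammaSet n k).ncard

/-- `δ(n,k) = |Δ_n^k|`. -/
noncomputable def deltaCard (n k : ℕ) : ℕ := (DeltaSet n k).ncard

/-! Rows and columns are sorted decreasingly as binary numbers, so a leading `1` in some row
(column) forces a leading `1` in every earlier row (column). With two ones per line this puts
ones at `(0,0)`, `(0,1)` and `(1,0)` (indices from 0); together with `a₁₁ = 1` the first two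
rows and columns are used up, so `A = diag(J₂, B)`. Conversely `diag(J₂, B) ∈ Δ_{n+2}^2` iff
`B ∈ Δ_n^2`: the two top rows encode `2^(n+1) + 2^n`, which exceeds every row of `B`. -/

open Matrix (vecCons vecHead vecTail)

lemma fin_two_eq_zero_of_ne_one {a : Fin 2} (h : a ≠ 1) : a = 0 := by omega

lemma antitone_vecCons_iff {α : Type*} [Preorder α] {n : ℕ} {a : α} {g : Fin n → α} :
    Antitone (vecCons a g) ↔ (∀ i, g i ≤ a) ∧ Antitone g := by
  simp only [antitone_iff_forall_lt]
  exact Fin.liftFun_cons (· ≥ ·)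

def binVal {m : ℕ} (f : Fin m → Fin 2) : ℕ := ∑ j : Fin m, (f j : ℕ) * 2 ^ (m - 1 - (j : ℕ))

lemma rowVal_apply {n m : ℕ} (A : Fin n → Fin m → Fin 2) (i : Fin n) :
    rowVal A i = binVal (A i) := rfl

lemma binVal_vecCons {m : ℕ} (a : Fin 2) (f : Fin m → Fin 2) :
    binVal (vecCons a f) = (a : ℕ) * 2 ^ m + binVal f := by
  simp only [binVal, Fin.sum_univ_succ, Matrix.cons_val_zero, Matrix.cons_val_succ, Fin.val_zero,
    Fin.val_succ, Nat.succ_sub_one, Nat.sub_zero]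
  congr 1
  refine Finset.sum_congr rfl fun j _ => ?_
  congr 2
  omega

lemma binVal_lt {m : ℕ} (f : Fin m → Fin 2) : binVal f < 2 ^ m := by
  induction m with
  | zero => simp [binVal]
  | succ m ih =>
    rw [← Matrix.cons_head_tail f, binVal_vecCons, pow_succ]
    have := ih (vecTail f)
    have : ((vecHead f : Fin 2) : ℕ) ≤ 1 := Fin.is_le _
    nlinarith

lemma binVal_lt_binVal_of_head {m : ℕ} {f g : Fin (m + 1) → Fin 2} (hf : f 0 = 0) (hg : g 0 = 1) :
    binVal f < binVal g := by
  rw [← Matrix.cons_head_tail f, ← Matrix.cons_head_tail g, binVal_vecCons, binVal_vecCons]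
  simp only [vecHead, hf, hg, Fin.val_zero, Fin.val_one, zero_mul, one_mul, zero_add]
  exact (binVal_lt _).trans_le (Nat.le_add_right _ _)

lemma head_eq_one_of_antitone_rowVal {n m : ℕ} {A : Fin n → Fin (m + 1) → Fin 2}
    (hA : Antitone (rowVal A)) {i j : Fin n} (hij : i ≤ j) (hj : A j 0 = 1) : A i 0 = 1 := by
  by_contra hi
  exact (hA hij).not_gt (binVal_lt_binVal_of_head (fin_two_eq_zero_of_ne_one hi) hj)

lemma exists_ne_eq_one_of_sum_eq_two {m : ℕ} {f : Fin m → Fin 2} (hf : ∑ j, (f j : ℕ) = 2)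
    (a : Fin m) : ∃ c ≠ a, f c = 1 := by
  by_contra! h
  rw [Finset.sum_eq_single a (fun c _ hc => by simp [fin_two_eq_zero_of_ne_one (h c hc)])
    (by simp)] at hf
  omega

lemma tail_eq_zero_of_sum_eq_two {m : ℕ} {f : Fin (m + 2) → Fin 2} (hf : ∑ j, (f j : ℕ) = 2)
    (h0 : f 0 = 1) (h1 : f 1 = 1) (j : Fin m) : f j.succ.succ = 0 := by
  rw [Fin.sum_univ_succ, Fin.sum_univ_succ, h0, Fin.succ_zero_eq_one, h1] at hf
  have hrest : ∑ i : Fin m, (f i.succ.succ : ℕ) = 0 := by simp only [Fin.val_one] at hf; omega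
  have := Finset.sum_eq_zero_iff.mp hrest j (Finset.mem_univ _)
  omega

def RowsSortedWithSum {n m : ℕ} (A : Fin n → Fin m → Fin 2) (k : ℕ) : Prop :=
  Antitone (rowVal A) ∧ ∀ i, ∑ j, (A i j : ℕ) = k

lemma mem_DeltaSet_iff {n k : ℕ} {A : Fin n → Fin n → Fin 2} :
    A ∈ DeltaSet n k ↔ RowsSortedWithSum A k ∧ RowsSortedWithSum (fun i j => A j i) k :=
  ⟨fun ⟨⟨hr, hc⟩, hrs, hcs⟩ => ⟨⟨hr, hrs⟩, hc, hcs⟩, fun ⟨⟨hr, hrs⟩, hc, hcs⟩ => ⟨⟨hr, hc⟩, hrs, hcs⟩⟩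

lemma transpose_mem_DeltaSet {n k : ℕ} {A : Fin n → Fin n → Fin 2} (hA : A ∈ DeltaSet n k) :
    (fun i j => A j i) ∈ DeltaSet n k := by
  rw [mem_DeltaSet_iff] at hA ⊢
  exact hA.symm

lemma first_two_entries_eq_one_of_mem_DeltaSet {n : ℕ} {A : Fin (n + 2) → Fin (n + 2) → Fin 2}
    (hA : A ∈ DeltaSet (n + 2) 2) : A 0 0 = 1 ∧ A 0 1 = 1 := by
  obtain ⟨⟨hr, hc⟩, hrs, hcs⟩ := hA
  obtain ⟨i, -, hi⟩ := exists_ne_eq_one_of_sum_eq_two (hcs 0) 0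
  have h00 : A 0 0 = 1 := head_eq_one_of_antitone_rowVal hr (Fin.zero_le i) hi
  obtain ⟨j, hj0, hj⟩ := exists_ne_eq_one_of_sum_eq_two (hrs 0) 0
  exact ⟨h00, head_eq_one_of_antitone_rowVal (A := fun i j => A j i) hc
    (Fin.one_le_of_ne_zero hj0) hj⟩

/-- `diag(J₂, B)`, where `J₂` is the all-ones `2 × 2` block. -/
def twoBlock {n m : ℕ} (B : Fin n → Fin m → Fin 2) : Fin (n + 2) → Fin (m + 2) → Fin 2 :=
  vecCons (vecCons 1 (vecCons 1 0)) (vecCons (vecCons 1 (vecCons 1 0))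
    fun i => vecCons 0 (vecCons 0 (B i)))

def lowerRight {n m : ℕ} (A : Fin (n + 2) → Fin (m + 2) → Fin 2) : Fin n → Fin m → Fin 2 :=
  fun i j => A i.succ.succ j.succ.succ

lemma eq_twoBlock_lowerRight {n : ℕ} {A : Fin (n + 2) → Fin (n + 2) → Fin 2}
    (hA : A ∈ DeltaSet (n + 2) 2) (h11 : A 1 1 = 1) : A = twoBlock (lowerRight A) := by
  obtain ⟨h00, h01⟩ := first_two_entries_eq_one_of_mem_DeltaSet hA
  obtain ⟨-, h10⟩ := first_two_entries_eq_one_of_mem_DeltaSet (transpose_mem_DeltaSet hA)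
  obtain ⟨-, hrs, hcs⟩ := hA
  have hrow0 := tail_eq_zero_of_sum_eq_two (hrs 0) h00 h01
  have hrow1 := tail_eq_zero_of_sum_eq_two (hrs 1) h10 h11
  have hcol0 := tail_eq_zero_of_sum_eq_two (f := fun i => A i 0) (hcs 0) h00 h10
  have hcol1 := tail_eq_zero_of_sum_eq_two (f := fun i => A i 1) (hcs 1) h01 h11
  funext i j
  refine Fin.cases ?_ (Fin.cases ?_ fun i => ?_) i <;>
    refine Fin.cases ?_ (Fin.cases ?_ fun j => ?_) j
  all_goals simp_all [twoBlock, lowerRight]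

lemma transpose_twoBlock {n m : ℕ} (B : Fin n → Fin m → Fin 2) :
    (fun i j => twoBlock B j i) = twoBlock (fun i j => B j i) := by
  funext i j
  refine Fin.cases ?_ (Fin.cases ?_ fun i => ?_) i <;>
    refine Fin.cases ?_ (Fin.cases ?_ fun j => ?_) j
  all_goals simp [twoBlock]

lemma rowVal_twoBlock {n m : ℕ} (B : Fin n → Fin m → Fin 2) :
    rowVal (twoBlock B) =
      vecCons (2 ^ (m + 1) + 2 ^ m) (vecCons (2 ^ (m + 1) + 2 ^ m) (rowVal B)) := by
  funext i
  refine Fin.cases ?_ (Fin.cases ?_ fun i => ?_) i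
  all_goals simp only [twoBlock, rowVal_apply, Matrix.cons_val_zero, Matrix.cons_val_succ,
    binVal_vecCons]
  all_goals simp [binVal]

lemma rowsSortedWithSum_twoBlock_iff {n m : ℕ} {B : Fin n → Fin m → Fin 2} :
    RowsSortedWithSum (twoBlock B) 2 ↔ RowsSortedWithSum B 2 := by
  have hlt (i : Fin n) : rowVal B i ≤ 2 ^ (m + 1) + 2 ^ m := by
    have := binVal_lt (B i)
    rw [rowVal_apply]; omega
  simp only [RowsSortedWithSum, rowVal_twoBlock, antitone_vecCons_iff, Fin.forall_fin_succ]
  simp [twoBlock, Fin.sum_univ_succ, hlt]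

lemma twoBlock_mem_DeltaSet_iff {n : ℕ} {B : Fin n → Fin n → Fin 2} :
    twoBlock B ∈ DeltaSet (n + 2) 2 ↔ B ∈ DeltaSet n 2 := by
  rw [mem_DeltaSet_iff, mem_DeltaSet_iff, transpose_twoBlock, rowsSortedWithSum_twoBlock_iff,
    rowsSortedWithSum_twoBlock_iff]

lemma bijOn_lowerRight (n : ℕ) :
    Set.BijOn lowerRight {A ∈ DeltaSet (n + 2) 2 | A 1 1 = 1} (DeltaSet n 2) := by
  refine ⟨fun A hA => ?_, fun A hA A' hA' h => ?_, fun B hB => ⟨twoBlock B, ⟨?_, rfl⟩, rfl⟩⟩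
  · rw [← twoBlock_mem_DeltaSet_iff, ← eq_twoBlock_lowerRight hA.1 hA.2]
    exact hA.1
  · rw [eq_twoBlock_lowerRight hA.1 hA.2, eq_twoBlock_lowerRight hA'.1 hA'.2, h]
  · exact twoBlock_mem_DeltaSet_iff.mpr hB

/-- Theorem (0-indexed): deleting the first two rows and columns is a bijection from
`{A ∈ Δ_{n+2}^2 | a_{11} = 1}` onto `Δ_n^2`; in particular that set has cardinality `δ(n,2)`. -/
theorem delta_two_case_one (n : ℕ) :
    Set.BijOn
      (fun (A : Fin (n + 2) → Fin (n + 2) → Fin 2) (i j : Fin n) =>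
        A ⟨(i : ℕ) + 2, by have := i.isLt; omega⟩ ⟨(j : ℕ) + 2, by have := j.isLt; omega⟩)
      {A ∈ DeltaSet (n + 2) 2 | A ⟨1, by omega⟩ ⟨1, by omega⟩ = 1}
      (DeltaSet n 2) ∧
    {A ∈ DeltaSet (n + 2) 2 | A ⟨1, by omega⟩ ⟨1, by omega⟩ = 1}.ncard = deltaCard n 2 := by
  have hbij := bijOn_lowerRight n
  exact ⟨hbij, hbij.ncard_eq⟩
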